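/- arXiv:2302.12809 — 4 statements merged into one kernel-verified Lean document; each statement's English description precedes it below -/
import Mathlib

section
/- Let P be a submonoid of a (discrete) group G. The map L̄_p ↦ L̄_p ⊗ L_p, i.e., ⊕_{n=1}^∞ L_p^{⊗n} ↦ ⊕_{n=2}^∞ L_p^{⊗n} (p ∈ P), extends to an isometric unital *-homomorphism from 𝒯̄_λ(P) into the bounded operators on ⊕_{n=2}^∞ ℓ²(P)^{⊗n}; that is, there exists a unital star-algebra homomorphism ρ defined on 𝒯̄_λ(P) with ρ(L̄_p) = ⊕_{n=2}^∞ L_p^{⊗n} for all p ∈ P, and ρ is isometric. -/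
noncomputable section
set_option synthInstance.maxHeartbeats 1000000
set_option maxHeartbeats 1000000
set_option linter.unusedVariables false

open scoped ENNReal

/-- `ℓ²(ι)` with complex coefficients. -/
abbrev l2 (ι : Type*) : Type _ := lp (fun _ : ι => ℂ) 2

/-- The canonical orthonormal basis vector `δ_i` of `ℓ²(ι)`. -/
noncomputable def ket {ι : Type*} (i : ι) : l2 ι :=
  haveI := Classical.decEq ι
  lp.single 2 i 1

variable {G : Type*} [Group G]

/-- A word `a = (p₁, p₂, …, p_{2k-1}, p_{2k})` of even length over `P`, recorded as the list of
its consecutive pairs `(p₁,p₂), (p₃,p₄), …, (p_{2k-1},p_{2k})`. -/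
abbrev Word (P : Submonoid G) := List (P × P)

/-- `ȧ = p₁⁻¹ p₂ ⋯ p_{2k-1}⁻¹ p_{2k} ∈ G`. -/
def wordElem (P : Submonoid G) (w : Word P) : G :=
  (w.map (fun pq => ((pq.1 : G))⁻¹ * (pq.2 : G))).prod

/-- A word is neutral if `ȧ = e`. -/
def IsNeutral (P : Submonoid G) (w : Word P) : Prop := wordElem P w = 1

/-- `V̇_a = V_{p₁}^* V_{p₂} ⋯ V_{p_{2k-1}}^* V_{p_{2k}}`. -/
def dotted {A : Type*} [Monoid A] [Star A] (P : Submonoid G) (V : P → A) (w : Word P) : A :=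
  (w.map (fun pq => star (V pq.1) * V pq.2)).prod

/-- The constructible right ideal `K(a) = {p ∈ P : L̇_a δ_p = δ_p}`, where `L` is the left
regular representation of `P` on `ℓ²(P)`. -/
def KIdeal (P : Submonoid G) (L : P → (l2 P →L[ℂ] l2 P)) (w : Word P) : Set P :=
  {p : P | dotted P L w (ket p) = ket p}

/-- The index set `X = ⨿_{n ≥ 1} Pⁿ` underlying `ℋ̄ = ⊕_{n≥1} ℓ²(P)^{⊗n} ≅ ℓ²(X)`. -/
abbrev PTuples (P : Submonoid G) := Σ n : ℕ, Fin (n + 1) → P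

/-- Coordinatewise left multiplication of a tuple by `p`; `L̄_p δ_x = δ_{p • x}`. -/
def pMul (P : Submonoid G) (p : P) (x : PTuples P) : PTuples P := ⟨x.1, fun i => p * x.2 i⟩

/-- The index set for `⊕_{n ≥ 2} ℓ²(P)^{⊗n}`: tuples of length `≥ 2`. -/
abbrev PTuples2 (P : Submonoid G) := Σ n : ℕ, Fin (n + 2) → P

/-- Coordinatewise left multiplication by `p` on tuples of length `≥ 2`. -/
def pMul2 (P : Submonoid G) (p : P) (x : PTuples2 P) : PTuples2 P := ⟨x.1, fun i => p * x.2 i⟩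

/-!
Tuples of length `≥ 2` sit inside all tuples, and the induced isometry `J : ℓ²(X₂) → ℓ²(X)`
intertwines `M_p` with `L̄_p`; since `L̄_p` preserves tuple lengths, the range projection `J J*`
commutes with every `L̄_p` and `L̄_p*`. Hence `a ↦ J* a J` is a unital `*`-homomorphism on the
commutant of `J J*`, sending `L̄_p` to `M_p`. It is isometric because doubling the first
coordinate of a tuple gives an isometry `W : ℓ²(X) → ℓ²(X₂)` such that `V = J W` also commutes
with every `L̄_p` and `L̄_p*`, so `‖a ξ‖ = ‖V a ξ‖ = ‖a J (W ξ)‖ = ‖J* a J (W ξ)‖`.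
-/

open ContinuousLinearMap
open scoped InnerProduct

lemma StarSubalgebra.mem_centralizer_of_commute {R A : Type*} [CommSemiring R] [StarRing R]
    [Semiring A] [StarRing A] [Algebra R A] [StarModule R A] {s : Set A} {z : A}
    (h : ∀ g ∈ s, Commute g z ∧ Commute g (star z)) : z ∈ StarSubalgebra.centralizer R s :=
  (StarSubalgebra.mem_centralizer_iff R).2 fun g hg =>
    ⟨(h g hg).1, by simpa using ((h g hg).2.star_star).eq⟩

lemma ContinuousLinearMap.commute_comp_of_intertwines {R E F : Type*} [Semiring R]
    [AddCommMonoid E] [Module R E] [TopologicalSpace E]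
    [AddCommMonoid F] [Module R F] [TopologicalSpace F]
    {A : E →L[R] E} {B : F →L[R] F} {X : E →L[R] F} {Y : F →L[R] E}
    (hY : A ∘L Y = Y ∘L B) (hX : B ∘L X = X ∘L A) : Commute A (Y ∘L X) := by
  change A ∘L Y ∘L X = (Y ∘L X) ∘L A
  rw [← comp_assoc, hY, comp_assoc, hX, comp_assoc]

section Compression

variable {𝕜 H K : Type*} [RCLike 𝕜]
  [NormedAddCommGroup H] [InnerProductSpace 𝕜 H] [CompleteSpace H]
  [NormedAddCommGroup K] [InnerProductSpace 𝕜 K] [CompleteSpace K]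

lemma comp_adjoint_comp_of_adjoint_comp_eq_one {J : K →L[𝕜] H} (hJ : J† ∘L J = 1) :
    (J ∘L J†) ∘L J = J := by
  rw [comp_assoc, hJ, one_def, comp_id]

def compressionStarAlgHom (J : K →L[𝕜] H) (hJ : J† ∘L J = 1) :
    StarSubalgebra.centralizer 𝕜 {J ∘L J†} →⋆ₐ[𝕜] (K →L[𝕜] K) where
  toFun a := J† ∘L (a : H →L[𝕜] H) ∘L J
  map_one' := by simpa [one_def, id_comp] using hJ
  map_mul' a b := by
    have hb : (J ∘L J†) * (b : H →L[𝕜] H) = (b : H →L[𝕜] H) * (J ∘L J†) :=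
      ((StarSubalgebra.mem_centralizer_iff 𝕜).1 b.2 _ rfl).1
    calc J† ∘L ((a : H →L[𝕜] H) * (b : H →L[𝕜] H)) ∘L J
        = J† ∘L (a : H →L[𝕜] H) ∘L ((b : H →L[𝕜] H) * (J ∘L J†)) ∘L J := by
          rw [mul_def, mul_def, comp_assoc (b : H →L[𝕜] H),
            comp_adjoint_comp_of_adjoint_comp_eq_one hJ, comp_assoc]
      _ = (J† ∘L (a : H →L[𝕜] H) ∘L J) * (J† ∘L (b : H →L[𝕜] H) ∘L J) := by
          simp only [← hb, mul_def, comp_assoc]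
  map_zero' := by simp
  map_add' a b := by simp [add_comp, comp_add]
  commutes' c := by
    simp only [Algebra.algebraMap_eq_smul_one, SetLike.val_smul, OneMemClass.coe_one, smul_comp,
      comp_smul]
    rw [one_def, id_comp, hJ, one_def]
  map_star' a := by simp [star_eq_adjoint, adjoint_comp, comp_assoc]

lemma norm_adjoint_comp_comp_eq {J : K →L[𝕜] H} (hJ : J† ∘L J = 1) {W : H →L[𝕜] K}
    (hW : ∀ x, ‖W x‖ = ‖x‖) {a : H →L[𝕜] H} (haQ : Commute (J ∘L J†) a)
    (haV : Commute (J ∘L W) a) : ‖J† ∘L a ∘L J‖ = ‖a‖ := by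
  have hJ' : ∀ x, ‖J x‖ = ‖x‖ := (norm_map_iff_adjoint_comp_self J).2 hJ
  have hJ_le : ‖J‖ ≤ 1 := opNorm_le_bound _ zero_le_one fun x => by rw [hJ', one_mul]
  have haJ : a ∘L J = J ∘L (J† ∘L a ∘L J) :=
    calc a ∘L J = (a * (J ∘L J†)) ∘L J := by
          rw [mul_def, comp_assoc, comp_adjoint_comp_of_adjoint_comp_eq_one hJ]
      _ = J ∘L (J† ∘L a ∘L J) := by rw [← haQ.eq, mul_def]; simp only [comp_assoc]
  refine le_antisymm ?_ (opNorm_le_bound _ (norm_nonneg _) fun x => ?_)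
  · calc ‖J† ∘L a ∘L J‖ ≤ ‖J†‖ * (‖a‖ * ‖J‖) :=
          (opNorm_comp_le _ _).trans (by gcongr; exact opNorm_comp_le _ _)
      _ ≤ 1 * (‖a‖ * 1) := by
          rw [LinearIsometryEquiv.norm_map]; gcongr
      _ = ‖a‖ := by ring
  · calc ‖a x‖ = ‖J (W (a x))‖ := by rw [hJ', hW]
      _ = ‖a (J (W x))‖ := congrArg norm (DFunLike.congr_fun haV x)
      _ = ‖J ((J† ∘L a ∘L J) (W x))‖ := congrArg norm (DFunLike.congr_fun haJ (W x))
      _ = ‖(J† ∘L a ∘L J) (W x)‖ := hJ' _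
      _ ≤ ‖J† ∘L a ∘L J‖ * ‖W x‖ := le_opNorm _ _
      _ = ‖J† ∘L a ∘L J‖ * ‖x‖ := by rw [hW]

end Compression

section L2Map

variable {α β : Type*}

lemma orthonormal_ket : Orthonormal ℂ (ket : α → l2 α) := by
  classical
  rw [orthonormal_iff_ite]
  intro i j
  simp [ket, lp.inner_single_left, Pi.single_apply]

lemma inner_ket_left (a : α) (f : l2 α) : inner ℂ (ket a) f = f a := by
  classical
  simp [ket, lp.inner_single_left]

lemma ext_ket {E : Type*} [AddCommMonoid E] [Module ℂ E] [TopologicalSpace E] [T2Space E]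
    {A B : l2 α →L[ℂ] E} (h : ∀ a, A (ket a) = B (ket a)) : A = B := by
  classical
  exact lp.ext_continuousLinearMap (by norm_num) fun a => ext_ring (h a)

variable {m : α → β} (hm : Function.Injective m)

def l2Map : l2 α →L[ℂ] l2 β := by
  classical exact
  ((orthonormal_ket.comp m hm).orthogonalFamily.linearIsometry).toContinuousLinearMap

lemma l2Map_ket (a : α) : l2Map hm (ket a) = ket (m a) := by
  classical
  simp [l2Map, ket]

lemma norm_l2Map_apply (f : l2 α) : ‖l2Map hm f‖ = ‖f‖ := LinearIsometry.norm_map _ _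

lemma adjoint_l2Map_comp_l2Map : adjoint (l2Map hm) ∘L l2Map hm = 1 :=
  (norm_map_iff_adjoint_comp_self _).1 (norm_l2Map_apply hm)

lemma adjoint_l2Map_ket_apply (a : α) : adjoint (l2Map hm) (ket (m a)) = ket a := by
  rw [← l2Map_ket hm, ← comp_apply, adjoint_l2Map_comp_l2Map, one_apply_eq_self]

lemma adjoint_l2Map_ket_of_notMem {b : β} (hb : b ∉ Set.range m) :
    adjoint (l2Map hm) (ket b) = 0 := by
  ext a
  rw [← inner_ket_left, adjoint_inner_right, l2Map_ket,
    orthonormal_ket.inner_eq_zero fun h => hb ⟨a, h⟩]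
  rfl

variable {σ : β → β} {τ : α → α} {A : l2 β →L[ℂ] l2 β} {B : l2 α →L[ℂ] l2 α}

lemma comp_l2Map_eq (hA : ∀ b, A (ket b) = ket (σ b)) (hB : ∀ a, B (ket a) = ket (τ a))
    (h : ∀ a, m (τ a) = σ (m a)) : A ∘L l2Map hm = l2Map hm ∘L B :=
  ext_ket fun a => by simp only [comp_apply, l2Map_ket, hA, hB, h]

lemma adjoint_l2Map_comp_eq (hA : ∀ b, A (ket b) = ket (σ b)) (hB : ∀ a, B (ket a) = ket (τ a))
    (h : ∀ a, m (τ a) = σ (m a)) (hσ : ∀ b, σ b ∈ Set.range m → b ∈ Set.range m) :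
    adjoint (l2Map hm) ∘L A = B ∘L adjoint (l2Map hm) := by
  refine ext_ket fun b => ?_
  by_cases hb : b ∈ Set.range m
  · obtain ⟨a, rfl⟩ := hb
    simp only [comp_apply, hA, hB, ← h, adjoint_l2Map_ket_apply]
  · simp only [comp_apply, hA, adjoint_l2Map_ket_of_notMem hm hb, map_zero,
      adjoint_l2Map_ket_of_notMem hm (mt (hσ b) hb)]

end L2Map

section Tuples

variable {P : Submonoid G}

def PTuples2.toPTuples (x : PTuples2 P) : PTuples P := ⟨x.1 + 1, x.2⟩

def PTuples.dupHead (x : PTuples P) : PTuples2 P := ⟨x.1, Fin.cons (x.2 0) x.2⟩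

lemma PTuples2.toPTuples_injective : Function.Injective (PTuples2.toPTuples (P := P)) := by
  rintro ⟨n, f⟩ ⟨n', f'⟩ h
  simp only [PTuples2.toPTuples, Sigma.mk.inj_iff, add_left_inj] at h
  obtain ⟨rfl, h⟩ := h
  rw [eq_of_heq h]

lemma PTuples.dupHead_injective : Function.Injective (PTuples.dupHead (P := P)) :=
  Function.LeftInverse.injective (g := fun y => ⟨y.1, Fin.tail y.2⟩) fun _ => rfl

lemma pMul_toPTuples (p : P) (x : PTuples2 P) :
    pMul P p (PTuples2.toPTuples x) = PTuples2.toPTuples (pMul2 P p x) := rfl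

lemma dupHead_pMul (p : P) (x : PTuples P) :
    PTuples.dupHead (pMul P p x) = pMul2 P p (PTuples.dupHead x) := by
  refine Sigma.ext rfl (heq_of_eq (funext fun i => ?_))
  cases i using Fin.cases <;> rfl

lemma mem_range_toPTuples_iff {x : PTuples P} :
    x ∈ Set.range PTuples2.toPTuples ↔ x.1 ≠ 0 := by
  refine ⟨?_, fun hx => ?_⟩
  · rintro ⟨y, rfl⟩
    exact Nat.succ_ne_zero _
  · obtain ⟨_ | n, f⟩ := x
    · exact absurd rfl hx
    · exact ⟨⟨n, f⟩, rfl⟩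

lemma mem_range_dupHead_iff {y : PTuples2 P} :
    y ∈ Set.range PTuples.dupHead ↔ y.2 0 = y.2 1 := by
  refine ⟨?_, fun hy => ⟨⟨y.1, Fin.tail y.2⟩, Sigma.ext rfl (heq_of_eq ?_)⟩⟩
  · rintro ⟨x, rfl⟩
    rfl
  · conv_rhs => rw [← Fin.cons_self_tail y.2, hy]
    rfl

lemma mem_range_toPTuples_of_pMul {p : P} {x : PTuples P}
    (hx : pMul P p x ∈ Set.range PTuples2.toPTuples) : x ∈ Set.range PTuples2.toPTuples :=
  mem_range_toPTuples_iff.2 ((mem_range_toPTuples_iff (x := pMul P p x)).1 hx)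

lemma mem_range_dupHead_of_pMul2 {p : P} {y : PTuples2 P}
    (hy : pMul2 P p y ∈ Set.range PTuples.dupHead) : y ∈ Set.range PTuples.dupHead :=
  mem_range_dupHead_iff.2 (mul_left_cancel (mem_range_dupHead_iff.1 hy))

end Tuples

section Intertwining

variable (P : Submonoid G)

def l2Incl : l2 (PTuples2 P) →L[ℂ] l2 (PTuples P) := l2Map PTuples2.toPTuples_injective

def l2DupHead : l2 (PTuples P) →L[ℂ] l2 (PTuples2 P) := l2Map PTuples.dupHead_injective

variable {P} {p : P} {A : l2 (PTuples P) →L[ℂ] l2 (PTuples P)}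
  {B : l2 (PTuples2 P) →L[ℂ] l2 (PTuples2 P)}

lemma comp_l2Incl (hA : ∀ x, A (ket x) = ket (pMul P p x))
    (hB : ∀ x, B (ket x) = ket (pMul2 P p x)) :
    A ∘L l2Incl P = l2Incl P ∘L B :=
  comp_l2Map_eq _ hA hB fun x => (pMul_toPTuples p x).symm

lemma adjoint_l2Incl_comp (hA : ∀ x, A (ket x) = ket (pMul P p x))
    (hB : ∀ x, B (ket x) = ket (pMul2 P p x)) :
    (l2Incl P)† ∘L A = B ∘L (l2Incl P)† :=
  adjoint_l2Map_comp_eq _ hA hB (fun x => (pMul_toPTuples p x).symm)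
    fun _ => mem_range_toPTuples_of_pMul

lemma comp_l2DupHead (hA : ∀ x, A (ket x) = ket (pMul P p x))
    (hB : ∀ x, B (ket x) = ket (pMul2 P p x)) :
    B ∘L l2DupHead P = l2DupHead P ∘L A :=
  comp_l2Map_eq _ hB hA (dupHead_pMul p)

lemma adjoint_l2DupHead_comp (hA : ∀ x, A (ket x) = ket (pMul P p x))
    (hB : ∀ x, B (ket x) = ket (pMul2 P p x)) :
    (l2DupHead P)† ∘L B = A ∘L (l2DupHead P)† :=
  adjoint_l2Map_comp_eq _ hB hA (dupHead_pMul p) fun _ => mem_range_dupHead_of_pMul2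

end Intertwining

lemma l2Incl_comp_subset_centralizer {P : Submonoid G}
    {Lbar : P → (l2 (PTuples P) →L[ℂ] l2 (PTuples P))}
    (hLbar : ∀ (p : P) (x : PTuples P), Lbar p (ket x) = ket (pMul P p x))
    {M : P → (l2 (PTuples2 P) →L[ℂ] l2 (PTuples2 P))}
    (hM : ∀ (p : P) (x : PTuples2 P), M p (ket x) = ket (pMul2 P p x)) :
    {l2Incl P ∘L (l2Incl P)†, l2Incl P ∘L l2DupHead P} ⊆
      (StarSubalgebra.centralizer ℂ (Set.range Lbar) : Set _) := by
  rintro _ (rfl | rfl) <;> refine StarSubalgebra.mem_centralizer_of_commute ?_ <;>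
    rintro _ ⟨p, rfl⟩ <;> rw [star_eq_adjoint, adjoint_comp]
  · rw [adjoint_adjoint]
    have h := commute_comp_of_intertwines (comp_l2Incl (hLbar p) (hM p))
      (adjoint_l2Incl_comp (hLbar p) (hM p)).symm
    exact ⟨h, h⟩
  · exact ⟨commute_comp_of_intertwines (comp_l2Incl (hLbar p) (hM p))
        (comp_l2DupHead (hLbar p) (hM p)),
      commute_comp_of_intertwines (adjoint_l2DupHead_comp (hLbar p) (hM p)).symm
        (adjoint_l2Incl_comp (hLbar p) (hM p)).symm⟩

/-- **Proposition (doubling).**  Let `P` be a submonoid of a group `G` and let `L̄` be its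
enhanced left regular representation, generating `𝒯̄_λ(P) ⊆ B(ℋ̄)`.  The map
`L̄_p = ⊕_{n≥1} L_p^{⊗n} ↦ ⊕_{n≥2} L_p^{⊗n}` extends to an isometric unital
`*`-homomorphism of `𝒯̄_λ(P)`. -/
theorem enhanced_doubling (P : Submonoid G)
    (Lbar : P → (l2 (PTuples P) →L[ℂ] l2 (PTuples P)))
    (hLbar : ∀ (p : P) (x : PTuples P), Lbar p (ket x) = ket (pMul P p x))
    (M : P → (l2 (PTuples2 P) →L[ℂ] l2 (PTuples2 P)))
    (hM : ∀ (p : P) (x : PTuples2 P), M p (ket x) = ket (pMul2 P p x)) :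
    ∃ ρ : (StarAlgebra.adjoin ℂ (Set.range Lbar)).topologicalClosure →⋆ₐ[ℂ]
        (l2 (PTuples2 P) →L[ℂ] l2 (PTuples2 P)),
      (∀ (p : P) (h : Lbar p ∈ (StarAlgebra.adjoin ℂ (Set.range Lbar)).topologicalClosure),
        ρ ⟨Lbar p, h⟩ = M p) ∧
      (∀ a, ‖ρ a‖ = ‖(a : l2 (PTuples P) →L[ℂ] l2 (PTuples P))‖) := by
  have hJ : (l2Incl P)† ∘L l2Incl P = 1 := adjoint_l2Map_comp_l2Map _
  have hsub : (StarAlgebra.adjoin ℂ (Set.range Lbar)).topologicalClosure ≤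
      StarSubalgebra.centralizer ℂ {l2Incl P ∘L (l2Incl P)†, l2Incl P ∘L l2DupHead P} :=
    (StarSubalgebra.topologicalClosure_adjoin_le_centralizer_centralizer ℂ _).trans
      (StarSubalgebra.centralizer_le _ _ _ (l2Incl_comp_subset_centralizer hLbar hM))
  refine ⟨(compressionStarAlgHom (l2Incl P) hJ).comp (StarSubalgebra.inclusion
      (hsub.trans (StarSubalgebra.centralizer_le _ _ _ (by simp)))), fun p _ => ?_, fun a => ?_⟩
  · change (l2Incl P)† ∘L Lbar p ∘L l2Incl P = M p
    rw [comp_l2Incl (hLbar p) (hM p), ← comp_assoc, hJ, one_def, id_comp]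
  · have ha := (StarSubalgebra.mem_centralizer_iff ℂ).1 (hsub a.2)
    exact norm_adjoint_comp_comp_eq hJ (norm_l2Map_apply _) (ha _ (by simp)).1
      (ha (l2Incl P ∘L l2DupHead P) (by simp)).1
end
end

section
/- Let P be a submonoid of a (discrete) group G and let a_0, a_1, …, a_n be neutral words over P. If ∏_{i=1}^{n} (L̄̇_{a_0} − L̄̇_{a_0 a_i}) = 0 in B(ℋ̄), where a_0 a_i denotes the concatenation of the words a_0 and a_i, then K(a_0) = K(a_0 a_i) for some i ∈ {1, …, n}. (The factors commute, being differences of commuting diagonal projections, so the product is unambiguous.) -/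
noncomputable section
set_option synthInstance.maxHeartbeats 1000000
set_option maxHeartbeats 1000000
set_option linter.unusedVariables false

open scoped ENNReal

variable {G : Type*} [Group G]

/-!
The operators `L̇_a` and `L̄̇_a` send basis vectors to basis vectors or to `0`, following the
partial bijection `p₁⁻¹ p₂ ⋯ p_{2k-1}⁻¹ p_{2k}` of `P` (coordinatewise on tuples). For a neutral
word `a` this gives `K(a₀ a) = K(a) ∩ K(a₀)`, and `L̄̇_a δ_x` is `δ_x` when every coordinate of
`x` lies in `K(a)` and `0` otherwise. If `K(a₀ aᵢ) ≠ K(a₀)` for every `i`, pick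
`pᵢ ∈ K(a₀) \ K(aᵢ)`: every factor `L̄̇_{a₀} - L̄̇_{a₀ aᵢ}` fixes `δ_{(p₁, …, p_n)}`, so the
product does not vanish.
-/

open scoped InnerProductSpace

section Ket

variable {ι : Type*}

lemma inner_ket_left_s6 (i : ι) (f : l2 ι) : ⟪ket i, f⟫_ℂ = f i := by
  classical
  exact (lp.inner_single_left _ _ _).trans (by simp)

lemma ket_apply_self (i : ι) : (ket i : l2 ι) i = 1 := by
  classical
  exact lp.single_apply_self _ _ _

lemma ket_apply_of_ne {i j : ι} (h : j ≠ i) : (ket i : l2 ι) j = 0 := by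
  classical
  exact lp.single_apply_ne _ _ _ h

lemma ket_ne_zero (i : ι) : (ket i : l2 ι) ≠ 0 := fun h => by
  simpa [ket_apply_self] using congrArg (fun f : l2 ι => f i) h

lemma ket_injective : Function.Injective (ket : ι → l2 ι) := fun i j h => by
  by_contra hij
  simpa [ket_apply_self, ket_apply_of_ne hij] using congrArg (fun f : l2 ι => f i) h

lemma ket_apply_comp_of_injective {m : ι → ι} (hm : Function.Injective m) (x u : ι) :
    (ket (m x) : l2 ι) (m u) = (ket x : l2 ι) u := by
  by_cases h : u = x
  · rw [h, ket_apply_self, ket_apply_self]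
  · rw [ket_apply_of_ne h, ket_apply_of_ne (hm.ne h)]

lemma ext_ket_s6 {f g : l2 ι} (h : ∀ i, ⟪ket i, f⟫_ℂ = ⟪ket i, g⟫_ℂ) : f = g :=
  lp.ext <| funext fun i => by simpa only [inner_ket_left_s6] using h i

variable {V : l2 ι →L[ℂ] l2 ι} {m : ι → ι}

lemma star_apply_ket_apply (hm : Function.Injective m) (hV : ∀ x, V (ket x) = ket (m x))
    (x : ι) : star V (ket (m x)) = ket x :=
  ext_ket_s6 fun u => by
    rw [ContinuousLinearMap.star_eq_adjoint, ContinuousLinearMap.adjoint_inner_right, hV,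
      inner_ket_left_s6, inner_ket_left_s6, ket_apply_comp_of_injective hm]

lemma star_apply_ket_of_notMem_range (hV : ∀ x, V (ket x) = ket (m x)) {t : ι}
    (ht : t ∉ Set.range m) : star V (ket t) = 0 :=
  ext_ket_s6 fun u => by
    rw [ContinuousLinearMap.star_eq_adjoint, ContinuousLinearMap.adjoint_inner_right, hV,
      inner_ket_left_s6, inner_zero_right, ket_apply_of_ne fun h => ht ⟨u, h⟩]

end Ket

section WordReaches

variable {P : Submonoid G} {ι : Type*}

/-- `WordReaches M w x y`: the word `w = (p₁,q₁) ⋯ (p_k,q_k)`, read from the right as the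
partial map `p₁⁻¹ q₁ ⋯ p_k⁻¹ q_k` of `ι` (with `M p` standing for left multiplication by `p`),
is defined at `x` and sends it to `y`. -/
def WordReaches (M : P → ι → ι) : Word P → ι → ι → Prop
  | [], x, y => x = y
  | pq :: w, x, y => ∃ r, WordReaches M w x r ∧ M pq.1 y = M pq.2 r

variable {M : P → ι → ι}

lemma wordReaches_append {v w : Word P} {x y : ι} :
    WordReaches M (v ++ w) x y ↔ ∃ r, WordReaches M w x r ∧ WordReaches M v r y := by
  induction v generalizing y with
  | nil => simp [WordReaches]
  | cons pq v ih =>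
    simp only [List.cons_append, WordReaches, ih]
    constructor
    · rintro ⟨s, ⟨r, hr, hs⟩, hy⟩
      exact ⟨r, hr, s, hs, hy⟩
    · rintro ⟨r, hr, s, hs, hy⟩
      exact ⟨s, ⟨r, hr, hs⟩, hy⟩

variable {V : P → (l2 ι →L[ℂ] l2 ι)}

lemma dotted_cons_apply (pq : P × P) (w : Word P) (f : l2 ι) :
    dotted P V (pq :: w) f = star (V pq.1) (V pq.2 (dotted P V w f)) := by
  simp [dotted]

lemma dotted_apply_ket_of_wordReaches (hM : ∀ p, Function.Injective (M p))
    (hV : ∀ p x, V p (ket x) = ket (M p x)) {w : Word P} {x y : ι}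
    (h : WordReaches M w x y) : dotted P V w (ket x) = ket y := by
  induction w generalizing y with
  | nil => simp [dotted, show x = y from h]
  | cons pq w ih =>
    obtain ⟨r, hr, hy⟩ := h
    rw [dotted_cons_apply, ih hr, hV, ← hy, star_apply_ket_apply (hM _) (hV _)]

lemma dotted_apply_ket_of_forall_not_wordReaches (hM : ∀ p, Function.Injective (M p))
    (hV : ∀ p x, V p (ket x) = ket (M p x)) {w : Word P} {x : ι}
    (h : ∀ y, ¬ WordReaches M w x y) : dotted P V w (ket x) = 0 := by
  induction w with
  | nil => exact absurd rfl (h x)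
  | cons pq w ih =>
    rw [dotted_cons_apply]
    by_cases hx : ∃ r, WordReaches M w x r
    · obtain ⟨r, hr⟩ := hx
      rw [dotted_apply_ket_of_wordReaches hM hV hr, hV]
      exact star_apply_ket_of_notMem_range (hV _) fun ⟨y, hy⟩ => h y ⟨r, hr, hy⟩
    · rw [ih fun y hy => hx ⟨y, hy⟩, map_zero, map_zero]

end WordReaches

section LeftRegular

variable {P : Submonoid G}

lemma WordReaches.coe_eq {w : Word P} {x y : P} (h : WordReaches (· * ·) w x y) :
    (y : G) = wordElem P w * x := by
  induction w generalizing y with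
  | nil => simp [wordElem, show x = y from h]
  | cons pq w ih =>
    obtain ⟨r, hr, hy⟩ := h
    have hy : (pq.1 : G) * y = pq.2 * r := congrArg Subtype.val hy
    simp only [wordElem, List.map_cons, List.prod_cons] at ih ⊢
    rw [mul_assoc, ← ih hr, mul_assoc, ← hy, inv_mul_cancel_left]

lemma WordReaches.eq_of_isNeutral {w : Word P} (hw : IsNeutral P w) {x y : P}
    (h : WordReaches (· * ·) w x y) : y = x :=
  Subtype.ext <| by rw [h.coe_eq, hw, one_mul]

variable {L : P → (l2 P →L[ℂ] l2 P)} (hL : ∀ p q : P, L p (ket q) = ket (p * q))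
include hL

lemma mem_KIdeal_iff {w : Word P} {x : P} :
    x ∈ KIdeal P L w ↔ WordReaches (· * ·) w x x := by
  refine ⟨fun hx => ?_, dotted_apply_ket_of_wordReaches mul_right_injective hL⟩
  by_cases h : ∃ y, WordReaches (· * ·) w x y
  · obtain ⟨y, hy⟩ := h
    have : ket y = ket x := (dotted_apply_ket_of_wordReaches mul_right_injective hL hy).symm.trans hx
    rwa [ket_injective this] at hy
  · exact absurd ((dotted_apply_ket_of_forall_not_wordReaches mul_right_injective hL
      fun y hy => h ⟨y, hy⟩).symm.trans hx) (ket_ne_zero x).symm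

lemma KIdeal_append_of_isNeutral {v w : Word P} (hw : IsNeutral P w) :
    KIdeal P L (v ++ w) = KIdeal P L w ∩ KIdeal P L v := by
  ext x
  simp only [Set.mem_inter_iff, mem_KIdeal_iff hL, wordReaches_append]
  constructor
  · rintro ⟨r, hr, hv⟩
    obtain rfl := hr.eq_of_isNeutral hw
    exact ⟨hr, hv⟩
  · rintro ⟨hw, hv⟩
    exact ⟨x, hw, hv⟩

lemma not_wordReaches_append_of_notMem_KIdeal {v w : Word P} (hw : IsNeutral P w) {x : P}
    (hx : x ∉ KIdeal P L w) (y : P) : ¬ WordReaches (· * ·) (v ++ w) x y := by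
  intro h
  obtain ⟨r, hr, -⟩ := wordReaches_append.mp h
  obtain rfl := hr.eq_of_isNeutral hw
  exact hx ((mem_KIdeal_iff hL).mpr hr)

end LeftRegular

section Tuples

variable {P : Submonoid G}

lemma pMul_eq_mk_iff {p : P} {z : PTuples P} {m : ℕ} {g : Fin (m + 1) → P} :
    pMul P p z = ⟨m, g⟩ ↔ ∃ f, z = ⟨m, f⟩ ∧ ∀ j, p * f j = g j := by
  obtain ⟨m', f⟩ := z
  constructor
  · intro h
    obtain rfl : m' = m := congrArg Sigma.fst h
    exact ⟨f, rfl, congrFun (sigma_mk_injective h)⟩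
  · rintro ⟨f', h, hf'⟩
    obtain ⟨rfl, hf⟩ := Sigma.mk.inj_iff.mp h
    obtain rfl := eq_of_heq hf
    exact congrArg (Sigma.mk m') (funext hf')

lemma pMul_injective (p : P) : Function.Injective (pMul P p) := by
  rintro z ⟨m, g⟩ h
  obtain ⟨f, rfl, hf⟩ := pMul_eq_mk_iff.mp h
  exact congrArg (Sigma.mk m) (funext fun j => mul_left_cancel (hf j))

lemma wordReaches_pMul_iff {w : Word P} {m : ℕ} {f : Fin (m + 1) → P} {z : PTuples P} :
    WordReaches (pMul P) w ⟨m, f⟩ z ↔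
      ∃ g, z = ⟨m, g⟩ ∧ ∀ j, WordReaches (· * ·) w (f j) (g j) := by
  induction w generalizing z with
  | nil =>
    simp only [WordReaches]
    constructor
    · rintro rfl
      exact ⟨f, rfl, fun _ => rfl⟩
    · rintro ⟨g, rfl, hg⟩
      rw [funext hg]
  | cons pq w ih =>
    simp only [WordReaches, ih]
    constructor
    · rintro ⟨_, ⟨g, rfl, hg⟩, hz⟩
      obtain ⟨h, rfl, hh⟩ := pMul_eq_mk_iff.mp hz
      exact ⟨h, rfl, fun j => ⟨g j, hg j, hh j⟩⟩
    · rintro ⟨h, rfl, hh⟩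
      choose g hg hgh using hh
      exact ⟨⟨m, g⟩, ⟨g, rfl, hg⟩, congrArg (Sigma.mk m) (funext hgh)⟩

variable {L : P → (l2 P →L[ℂ] l2 P)} (hL : ∀ p q : P, L p (ket q) = ket (p * q))
  {Lbar : P → (l2 (PTuples P) →L[ℂ] l2 (PTuples P))}
  (hLbar : ∀ (p : P) (x : PTuples P), Lbar p (ket x) = ket (pMul P p x))

include hL hLbar in
lemma dotted_apply_ket_mk_of_forall_mem_KIdeal {w : Word P} {m : ℕ} {f : Fin (m + 1) → P}
    (hf : ∀ j, f j ∈ KIdeal P L w) : dotted P Lbar w (ket ⟨m, f⟩) = ket ⟨m, f⟩ :=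
  dotted_apply_ket_of_wordReaches pMul_injective hLbar <|
    wordReaches_pMul_iff.mpr ⟨f, rfl, fun j => (mem_KIdeal_iff hL).mp (hf j)⟩

include hLbar in
lemma dotted_apply_ket_mk_eq_zero {w : Word P} {m : ℕ} {f : Fin (m + 1) → P} (j : Fin (m + 1))
    (hj : ∀ y, ¬ WordReaches (· * ·) w (f j) y) : dotted P Lbar w (ket ⟨m, f⟩) = 0 :=
  dotted_apply_ket_of_forall_not_wordReaches pMul_injective hLbar fun _ hz => by
    obtain ⟨g, -, hg⟩ := wordReaches_pMul_iff.mp hz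
    exact hj _ (hg j)

end Tuples

theorem enhanced_prod_eq_zero_imp_general (P : Submonoid G)
    (L : P → (l2 P →L[ℂ] l2 P))
    (hL : ∀ p q : P, L p (ket q) = ket (p * q))
    (Lbar : P → (l2 (PTuples P) →L[ℂ] l2 (PTuples P)))
    (hLbar : ∀ (p : P) (x : PTuples P), Lbar p (ket x) = ket (pMul P p x))
    (a₀ : Word P) (n : ℕ) (a : Fin n → Word P)
    (ha : ∀ i, IsNeutral P (a i))
    (hprod : (List.ofFn (fun i : Fin n =>
      dotted P Lbar a₀ - dotted P Lbar (a₀ ++ a i))).prod = 0) :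
    ∃ i, KIdeal P L a₀ = KIdeal P L (a₀ ++ a i) := by
  by_contra! hne
  have hwit : ∀ i, ∃ p ∈ KIdeal P L a₀, p ∉ KIdeal P L (a i) := fun i =>
    Set.not_subset.mp fun hsub => hne i <| by
      rw [KIdeal_append_of_isNeutral hL (ha i), Set.inter_eq_right.mpr hsub]
  choose p hp₀ hp using hwit
  obtain ⟨x, hx⟩ : ∃ x : PTuples P, ∀ i,
      (dotted P Lbar a₀ - dotted P Lbar (a₀ ++ a i)) (ket x) = ket x := by
    cases n with
    | zero => exact ⟨⟨0, fun _ => 1⟩, fun i => i.elim0⟩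
    | succ m =>
      refine ⟨⟨m, p⟩, fun i => ?_⟩
      rw [sub_apply, dotted_apply_ket_mk_of_forall_mem_KIdeal hL hLbar hp₀,
        dotted_apply_ket_mk_eq_zero hLbar i
          (not_wordReaches_append_of_notMem_KIdeal hL (ha i) (hp i)), sub_zero]
  have hfix := (MulAction.stabilizerSubmonoid _ (ket x)).list_prod_mem
    (l := List.ofFn fun i => dotted P Lbar a₀ - dotted P Lbar (a₀ ++ a i))
    (List.forall_mem_ofFn_iff.mpr hx)
  rw [hprod, MulAction.mem_stabilizerSubmonoid_iff, zero_smul] at hfix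
  exact ket_ne_zero x hfix.symm

/-- **(Remark 4.5; the unit fiber of `C*_s(P) ≅ 𝒯̄(P)` is "free".)**
If `a₀, a₁, …, a_n` are neutral words over `P` and
`∏_{i=1}^n (L̄̇_{a₀} - L̄̇_{a₀ aᵢ}) = 0` in `B(ℋ̄)`, then `K(a₀) = K(a₀ aᵢ)` for some `i`. -/
theorem enhanced_prod_eq_zero_imp (P : Submonoid G)
    (L : P → (l2 P →L[ℂ] l2 P))
    (hL : ∀ p q : P, L p (ket q) = ket (p * q))
    (Lbar : P → (l2 (PTuples P) →L[ℂ] l2 (PTuples P)))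
    (hLbar : ∀ (p : P) (x : PTuples P), Lbar p (ket x) = ket (pMul P p x))
    (a₀ : Word P) (n : ℕ) (a : Fin n → Word P)
    (h₀ : IsNeutral P a₀) (ha : ∀ i, IsNeutral P (a i))
    (hprod : (List.ofFn (fun i : Fin n =>
      dotted P Lbar a₀ - dotted P Lbar (a₀ ++ a i))).prod = 0) :
    ∃ i, KIdeal P L a₀ = KIdeal P L (a₀ ++ a i) :=
  enhanced_prod_eq_zero_imp_general P L hL Lbar hLbar a₀ n a ha hprod

end
end

section
/- Let P be a submonoid of a (discrete) group G and let 𝒯_λ(P)⁺ be the norm-closed unital subalgebra of B(ℓ²(P)) generated by {L_p : p ∈ P}. If 𝒯_λ(P)⁺ admits a character ω (a nonzero multiplicative linear functional) satisfying ω(L_p) = 1 for all p ∈ P, then P is left reversible, i.e., pP ∩ qP ≠ ∅ for all p, q ∈ P. -/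
noncomputable section
set_option synthInstance.maxHeartbeats 1000000
set_option maxHeartbeats 1000000
set_option linter.unusedVariables false

open scoped ENNReal

variable {G : Type*} [Group G]

/-!
If `pP ∩ qP = ∅`, then `L_p` and `L_q` send the orthonormal basis `δ_r` onto the disjoint
orthonormal families `δ_{pr}` and `δ_{qr}`, so `(L_p + L_q)/√2` is an isometry and
`‖L_p + L_q‖ = √2`. But a character of a unital Banach algebra is contractive, and
`ω(L_p + L_q) = 2`.
-/

open scoped InnerProductSpace ComplexConjugate
open Function

section OrthonormalImages

variable {𝕜 E F ι κ : Type*} [RCLike 𝕜] [NormedAddCommGroup E] [InnerProductSpace 𝕜 E]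
  [NormedAddCommGroup F] [InnerProductSpace 𝕜 F]

theorem Orthonormal.inv_sqrt_two_smul_add {u : κ → E} (hu : Orthonormal 𝕜 u) {f g : ι → κ}
    (hf : Injective f) (hg : Injective g) (hfg : ∀ i j, f i ≠ g j) :
    Orthonormal 𝕜 fun i => (√2 : 𝕜)⁻¹ • (u (f i) + u (g i)) := by
  classical
  have hgf : ∀ i j, g i ≠ f j := fun i j => (hfg j i).symm
  have hc : conj (√2 : 𝕜)⁻¹ * (√2 : 𝕜)⁻¹ = 2⁻¹ := by
    rw [map_inv₀, RCLike.conj_ofReal, ← mul_inv, ← RCLike.ofReal_mul,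
      Real.mul_self_sqrt zero_le_two, RCLike.ofReal_ofNat]
  rw [orthonormal_iff_ite] at hu ⊢
  intro i j
  simp only [inner_smul_left, inner_smul_right, inner_add_left, inner_add_right, hu,
    hf.eq_iff, hg.eq_iff, hfg, hgf, if_false]
  split_ifs
  · linear_combination (2 : 𝕜) * hc
  · simp

theorem HilbertBasis.norm_map_eq_of_orthonormal (b : HilbertBasis ι 𝕜 E) {T : E →L[𝕜] F}
    (hT : Orthonormal 𝕜 (T ∘ b)) (x : E) : ‖T x‖ = ‖x‖ := by
  have hspan : ∀ y ∈ Submodule.span 𝕜 (Set.range b), ‖T y‖ = ‖y‖ := by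
    intro y hy
    rw [← Finsupp.range_linearCombination] at hy
    obtain ⟨c, rfl⟩ := hy
    have hTc : T (Finsupp.linearCombination 𝕜 b c) = Finsupp.linearCombination 𝕜 (T ∘ b) c :=
      Finsupp.apply_linearCombination 𝕜 (T : E →ₗ[𝕜] F) b c
    rw [@norm_eq_sqrt_re_inner 𝕜, @norm_eq_sqrt_re_inner 𝕜, hTc, hT.inner_finsupp_eq_sum_left,
      b.orthonormal.inner_finsupp_eq_sum_left]
  have hx : x ∈ (Submodule.span 𝕜 (Set.range b)).topologicalClosure := b.dense_span ▸ trivial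
  exact closure_minimal hspan (isClosed_eq (by fun_prop) continuous_norm) hx

theorem HilbertBasis.norm_add_le_sqrt_two (b : HilbertBasis ι 𝕜 E) {u : κ → F}
    (hu : Orthonormal 𝕜 u) {f g : ι → κ} (hf : Injective f) (hg : Injective g)
    (hfg : ∀ i j, f i ≠ g j) {T S : E →L[𝕜] F} (hT : ∀ i, T (b i) = u (f i))
    (hS : ∀ i, S (b i) = u (g i)) : ‖T + S‖ ≤ √2 := by
  set R := (√2 : 𝕜)⁻¹ • (T + S)
  have hR : Orthonormal 𝕜 (R ∘ b) := by
    convert hu.inv_sqrt_two_smul_add hf hg hfg using 1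
    funext i
    simp [R, hT, hS]
  have hR1 : ‖R‖ ≤ 1 :=
    R.opNorm_le_bound zero_le_one fun x => by rw [b.norm_map_eq_of_orthonormal hR, one_mul]
  have hTS : T + S = (√2 : 𝕜) • R := by
    simp [R, smul_smul]
  calc ‖T + S‖ = √2 * ‖R‖ := by rw [hTS, norm_smul, RCLike.norm_ofReal, abs_of_nonneg (by simp)]
    _ ≤ √2 := mul_le_of_le_one_right (by simp) hR1

end OrthonormalImages

theorem AlgHom.norm_apply_le_of_norm_one_le {𝕜 A : Type*} [NormedField 𝕜] [NormedRing A]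
    [NormedAlgebra 𝕜 A] [CompleteSpace A] (h1 : ‖(1 : A)‖ ≤ 1) (φ : A →ₐ[𝕜] 𝕜) (a : A) :
    ‖φ a‖ ≤ ‖a‖ :=
  (norm_apply_le_self_mul_norm_one φ a).trans (mul_le_of_le_one_right (norm_nonneg a) h1)

def ketBasis (ι : Type*) : HilbertBasis ι ℂ (l2 ι) :=
  HilbertBasis.ofRepr (LinearIsometryEquiv.refl ℂ _)

theorem coe_ketBasis (ι : Type*) : ⇑(ketBasis ι) = ket := by
  classical
  funext i
  rw [← (ketBasis ι).repr_symm_single]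
  rfl

/-- **(Theorem 5.3, (i) ⟹ (ii), reversibility part.)**  If the tensor algebra
`𝒯_λ(P)⁺` — the norm-closed unital subalgebra of `B(ℓ²(P))` generated by the left regular
representation — admits a character `ω` with `ω(L_p) = 1` for all `p ∈ P`, then `P` is
left reversible: `pP ∩ qP ≠ ∅` for all `p, q ∈ P`. -/
theorem character_implies_leftReversible (P : Submonoid G)
    (L : P → (l2 P →L[ℂ] l2 P))
    (hL : ∀ p q : P, L p (ket q) = ket (p * q))
    (ω : (Algebra.adjoin ℂ (Set.range L)).topologicalClosure →ₐ[ℂ] ℂ)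
    (hω : ∀ (p : P) (h : L p ∈ (Algebra.adjoin ℂ (Set.range L)).topologicalClosure),
      ω ⟨L p, h⟩ = 1) :
    ∀ p q : P, ∃ a b : P, p * a = q * b := by
  intro p q
  by_contra! hdisj
  have hmem : ∀ r, L r ∈ (Algebra.adjoin ℂ (Set.range L)).topologicalClosure := fun r =>
    (Algebra.adjoin ℂ (Set.range L)).le_topologicalClosure (Algebra.subset_adjoin ⟨r, rfl⟩)
  have : CompleteSpace (Algebra.adjoin ℂ (Set.range L)).topologicalClosure :=
    (Subalgebra.isClosed_topologicalClosure _).completeSpace_coe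
  have hnorm : ‖L p + L q‖ ≤ √2 :=
    (ketBasis P).norm_add_le_sqrt_two (coe_ketBasis P ▸ (ketBasis P).orthonormal)
      (mul_right_injective p) (mul_right_injective q) hdisj
      (by simp [coe_ketBasis, hL]) (by simp [coe_ketBasis, hL])
  have hω2 : ‖ω (⟨L p, hmem p⟩ + ⟨L q, hmem q⟩)‖ = 2 := by
    rw [map_add, hω, hω]
    norm_num
  have h2 : (2 : ℝ) ≤ √2 :=
    calc (2 : ℝ) = ‖ω (⟨L p, hmem p⟩ + ⟨L q, hmem q⟩)‖ := hω2.symm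
      _ ≤ ‖L p + L q‖ := ω.norm_apply_le_of_norm_one_le ContinuousLinearMap.norm_id_le _
      _ ≤ √2 := hnorm
  nlinarith [Real.sq_sqrt (zero_le_two : (0 : ℝ) ≤ 2)]

end
end

section
/- Let P be a submonoid of a (discrete) group G and let V = {V_p}_{p∈P} be an isometric representation of P on a Hilbert space H. Define W on ℓ²(P) ⊗ H, realized as the ℓ²-direct sum ⊕_{q∈P} H, by (Wξ)_q = V_q ξ_q. Then W is a well-defined isometry in B(ℓ²(P) ⊗ H) and W (L_p ⊗ I_H) = (L_p ⊗ V_p) W for all p ∈ P. Consequently ‖T‖ ≤ ‖φ(T)‖ for any map φ on operators of the form T = Σ (products of the L_p's) sending each L_p ⊗ I to L_p ⊗ V_p. -/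
noncomputable section
set_option synthInstance.maxHeartbeats 1000000
set_option maxHeartbeats 1000000
set_option linter.unusedVariables false

open scoped ENNReal

variable {G : Type*} [Group G]

/-- The element `δ_i ⊗ ξ` of the `ℓ²`-direct sum `⊕_{i ∈ ι} H`. -/
noncomputable def ketV {ι : Type*} {H : Type*} [NormedAddCommGroup H] [InnerProductSpace ℂ H]
    (i : ι) (ξ : H) : lp (fun _ : ι => H) 2 :=
  haveI := Classical.decEq ι
  lp.single 2 i ξ

/-! The diagonal operator `(Wξ)_q = V_q ξ_q` is an isometry because it is one coordinatewise.
On `δ_q ⊗ ξ` both `W (L_p ⊗ I)` and `(L_p ⊗ V_p) W` give `δ_{pq} ⊗ V_{pq} ξ`, by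
multiplicativity of `V`. Intertwining passes to products and linear combinations, and an
isometry `W` with `W T = S W` forces `‖T‖ = ‖W T‖ = ‖S W‖ ≤ ‖S‖`. -/

theorem SemiconjBy.list_prod_map {M ι : Type*} [Monoid M] {a : M} {f g : ι → M}
    (h : ∀ i, SemiconjBy a (f i) (g i)) (l : List ι) :
    SemiconjBy a (l.map f).prod (l.map g).prod := by
  induction l with
  | nil => exact SemiconjBy.one_right a
  | cons i l ih => simpa only [List.map_cons, List.prod_cons] using (h i).mul_right ih

theorem Finset.semiconjBy_sum_right {R ι : Type*} [NonUnitalNonAssocSemiring R] {a : R}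
    {f g : ι → R} (s : Finset ι) (h : ∀ i ∈ s, SemiconjBy a (f i) (g i)) :
    SemiconjBy a (∑ i ∈ s, f i) (∑ i ∈ s, g i) := by
  simp only [SemiconjBy, Finset.mul_sum, Finset.sum_mul]
  exact Finset.sum_congr rfl fun i hi => (h i hi).eq

theorem LinearIsometry.norm_le_of_comp_eq_comp {𝕜 E F : Type*} [NontriviallyNormedField 𝕜]
    [NormedAddCommGroup E] [NormedSpace 𝕜 E] [NormedAddCommGroup F] [NormedSpace 𝕜 F]
    (W : E →ₗᵢ[𝕜] F) {T : E →L[𝕜] E} {S : F →L[𝕜] F}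
    (h : W.toContinuousLinearMap ∘L T = S ∘L W.toContinuousLinearMap) : ‖T‖ ≤ ‖S‖ :=
  calc ‖T‖ = ‖W.toContinuousLinearMap ∘L T‖ := W.norm_toContinuousLinearMap_comp.symm
    _ = ‖S ∘L W.toContinuousLinearMap‖ := by rw [h]
    _ ≤ ‖S‖ * ‖W.toContinuousLinearMap‖ := S.opNorm_comp_le _
    _ ≤ ‖S‖ := mul_le_of_le_one_right (norm_nonneg _) W.norm_toContinuousLinearMap_le

namespace lp

variable {𝕜 ι : Type*} {E F : ι → Type*} [NormedField 𝕜]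
  [∀ i, NormedAddCommGroup (E i)] [∀ i, NormedSpace 𝕜 (E i)]
  [∀ i, NormedAddCommGroup (F i)] [∀ i, NormedSpace 𝕜 (F i)] {p : ℝ≥0∞} [Fact (1 ≤ p)]

def diagonalIsometry (V : ∀ i, E i →ₗᵢ[𝕜] F i) : lp E p →ₗᵢ[𝕜] lp F p where
  toFun f := ⟨fun i => V i (f i), (lp.memℓp f).mono' fun i => ((V i).norm_map _).le⟩
  map_add' f g := lp.ext <| funext fun i => map_add (V i) (f i) (g i)
  map_smul' c f := lp.ext <| funext fun i => map_smul (V i) c (f i)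
  norm_map' f := by
    have hp : p ≠ 0 := (zero_lt_one.trans_le (Fact.out : 1 ≤ p)).ne'
    exact le_antisymm (norm_mono hp fun i => ((V i).norm_map _).le)
      (norm_mono hp fun i => ((V i).norm_map _).ge)

@[simp]
theorem diagonalIsometry_apply (V : ∀ i, E i →ₗᵢ[𝕜] F i) (f : lp E p) (i : ι) :
    diagonalIsometry V f i = V i (f i) :=
  rfl

theorem diagonalIsometry_single [DecidableEq ι] (V : ∀ i, E i →ₗᵢ[𝕜] F i) (i : ι) (x : E i) :
    diagonalIsometry V (lp.single p i x) = lp.single p i (V i x) := by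
  ext j
  simp only [diagonalIsometry_apply, lp.single_apply]
  exact Pi.apply_single (fun j => V j) (fun j => map_zero _) i x j

theorem diagonalIsometry_comp_eq_comp {M H : Type*} [Monoid M] [DecidableEq M]
    [NormedAddCommGroup H] [NormedSpace 𝕜 H] (hp : p ≠ ⊤) (V : M → H →ₗᵢ[𝕜] H)
    (a : M) (hV : ∀ q x, V (a * q) x = V a (V q x))
    {T S : lp (fun _ : M => H) p →L[𝕜] lp (fun _ : M => H) p}
    (hT : ∀ q x, T (lp.single p q x) = lp.single p (a * q) x)
    (hS : ∀ q x, S (lp.single p q x) = lp.single p (a * q) (V a x)) :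
    (diagonalIsometry V).toContinuousLinearMap ∘L T =
      S ∘L (diagonalIsometry V).toContinuousLinearMap := by
  refine ext_continuousLinearMap hp fun q => ContinuousLinearMap.ext fun x => ?_
  simp only [ContinuousLinearMap.comp_apply, singleContinuousLinearMap_apply,
    LinearIsometry.coe_toContinuousLinearMap, hT, hS, diagonalIsometry_single, hV]

end lp

theorem intertwining_isometry_general (P : Submonoid G)
    {H : Type*} [NormedAddCommGroup H] [InnerProductSpace ℂ H] [CompleteSpace H]
    (V : P → (H →L[ℂ] H))
    (hVmul : ∀ p q : P, V (p * q) = V p * V q)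
    (hViso : ∀ p : P, star (V p) * V p = 1)
    (Tid : P → (lp (fun _ : P => H) 2 →L[ℂ] lp (fun _ : P => H) 2))
    (hTid : ∀ (p q : P) (ξ : H), Tid p (ketV q ξ) = ketV (p * q) ξ)
    (TV : P → (lp (fun _ : P => H) 2 →L[ℂ] lp (fun _ : P => H) 2))
    (hTV : ∀ (p q : P) (ξ : H), TV p (ketV q ξ) = ketV (p * q) (V p ξ)) :
    ∃ W : lp (fun _ : P => H) 2 →L[ℂ] lp (fun _ : P => H) 2,
      (∀ (ξ : lp (fun _ : P => H) 2) (q : P), (W ξ : ∀ _ : P, H) q = V q (ξ q)) ∧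
      (∀ ξ, ‖W ξ‖ = ‖ξ‖) ∧
      (∀ p : P, W ∘L Tid p = TV p ∘L W) ∧
      (∀ (m : ℕ) (c : Fin m → ℂ) (ws : Fin m → List P),
        ‖∑ i, c i • ((ws i).map Tid).prod‖ ≤ ‖∑ i, c i • ((ws i).map TV).prod‖) := by
  -- the instance inside `ketV`, so that `hTid` and `hTV` are statements about `lp.single`
  let _ : DecidableEq P := Classical.decEq P
  let V' (q : P) : H →ₗᵢ[ℂ] H := ⟨V q, (V q).norm_map_iff_adjoint_comp_self.mpr (hViso q)⟩
  let W := lp.diagonalIsometry (p := 2) V'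
  have hW (p : P) : SemiconjBy W.toContinuousLinearMap (Tid p) (TV p) :=
    lp.diagonalIsometry_comp_eq_comp ENNReal.ofNat_ne_top V' p
      (fun q x => by simp [V', hVmul]) (hTid p) (hTV p)
  refine ⟨W.toContinuousLinearMap, fun ξ q => rfl, W.norm_map, hW, fun m c ws => ?_⟩
  exact W.norm_le_of_comp_eq_comp <| Finset.univ.semiconjBy_sum_right fun i _ =>
    (SemiconjBy.list_prod_map hW (ws i)).smul_right (c i)

/-- **(The intertwining isometry `W`.)**  For an isometric representation `V` of `P` on
`H`, the operator `W` on `ℓ²(P) ⊗ H = ⊕_{q ∈ P} H` given by `(Wξ)_q = V_q ξ_q` is a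
well-defined isometry satisfying `W (L_p ⊗ I) = (L_p ⊗ V_p) W` for all `p`; consequently
`‖T‖ ≤ ‖φ(T)‖` for sums `T` of products of the `L_p ⊗ I`'s, where `φ` replaces each
`L_p ⊗ I` by `L_p ⊗ V_p`. -/
theorem intertwining_isometry (P : Submonoid G)
    {H : Type*} [NormedAddCommGroup H] [InnerProductSpace ℂ H] [CompleteSpace H]
    (V : P → (H →L[ℂ] H))
    (hV1 : V 1 = 1)
    (hVmul : ∀ p q : P, V (p * q) = V p * V q)
    (hViso : ∀ p : P, star (V p) * V p = 1)
    (Tid : P → (lp (fun _ : P => H) 2 →L[ℂ] lp (fun _ : P => H) 2))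
    (hTid : ∀ (p q : P) (ξ : H), Tid p (ketV q ξ) = ketV (p * q) ξ)
    (TV : P → (lp (fun _ : P => H) 2 →L[ℂ] lp (fun _ : P => H) 2))
    (hTV : ∀ (p q : P) (ξ : H), TV p (ketV q ξ) = ketV (p * q) (V p ξ)) :
    ∃ W : lp (fun _ : P => H) 2 →L[ℂ] lp (fun _ : P => H) 2,
      (∀ (ξ : lp (fun _ : P => H) 2) (q : P), (W ξ : ∀ _ : P, H) q = V q (ξ q)) ∧
      (∀ ξ, ‖W ξ‖ = ‖ξ‖) ∧
      (∀ p : P, W ∘L Tid p = TV p ∘L W) ∧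
      (∀ (m : ℕ) (c : Fin m → ℂ) (ws : Fin m → List P),
        ‖∑ i, c i • ((ws i).map Tid).prod‖ ≤ ‖∑ i, c i • ((ws i).map TV).prod‖) :=
  intertwining_isometry_general P V hVmul hViso Tid hTid TV hTV

end
end
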